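/- arXiv:1806.06721 — 5 statements merged into one kernel-verified Lean document; each statement's English description precedes it below -/
import Mathlib

section
/- The Cartesian product of two Pythagorean fuzzy graphs is a Pythagorean fuzzy graph. Specifically, if G₁** = (P₁, Q₁) and G₂** = (P₂, Q₂) are Pythagorean fuzzy graphs on crisp graphs G₁ = (V₁, E₁) and G₂ = (V₂, E₂), then the Cartesian product G₁** × G₂** (with vertex membership given pointwise by min of memberships and max of non-memberships, and edge values defined by min/max rules on the edges {(u,u₂)(u,v₂) : u ∈ V₁, u₂v₂ ∈ E₂} ∪ {(u₁,w)(v₁,w) : w ∈ V₂, u₁v₁ ∈ E₁}) satisfies ς_{Q₁×Q₂}(e) ≤ min of endpoint memberships and ξ_{Q₁×Q₂}(e) ≤ max of endpoint non-memberships for every edge e. -/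
/-- The Cartesian product of two Pythagorean fuzzy graphs is a Pythagorean fuzzy graph. -/
theorem cartesian_product_of_PFGs_is_PFG {V1 V2 : Type*}
    (E1 : V1 → V1 → Prop) (E2 : V2 → V2 → Prop)
    (ςP1 ξP1 : V1 → ℝ) (ςP2 ξP2 : V2 → ℝ)
    (ςQ1 ξQ1 : V1 → V1 → ℝ) (ςQ2 ξQ2 : V2 → V2 → ℝ)
    (hG1 : ∀ u v, E1 u v →
      ςQ1 u v ≤ min (ςP1 u) (ςP1 v) ∧ ξQ1 u v ≤ max (ξP1 u) (ξP1 v))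
    (hG2 : ∀ u v, E2 u v →
      ςQ2 u v ≤ min (ςP2 u) (ςP2 v) ∧ ξQ2 u v ≤ max (ξP2 u) (ξP2 v)) :
    (∀ (u : V1) (u2 v2 : V2), E2 u2 v2 →
      min (ςP1 u) (ςQ2 u2 v2) ≤ min (min (ςP1 u) (ςP2 u2)) (min (ςP1 u) (ςP2 v2)) ∧
      max (ξP1 u) (ξQ2 u2 v2) ≤ max (max (ξP1 u) (ξP2 u2)) (max (ξP1 u) (ξP2 v2))) ∧
    (∀ (w : V2) (u1 v1 : V1), E1 u1 v1 →
      min (ςQ1 u1 v1) (ςP2 w) ≤ min (min (ςP1 u1) (ςP2 w)) (min (ςP1 v1) (ςP2 w)) ∧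
      max (ξQ1 u1 v1) (ξP2 w) ≤ max (max (ξP1 u1) (ξP2 w)) (max (ξP1 v1) (ξP2 w))) := by
  refine ⟨fun u u2 v2 h => ?_, fun w u1 v1 h => ?_⟩
  · obtain ⟨h1, h2⟩ := hG2 u2 v2 h
    constructor
    · rw [← inf_inf_distrib_left]
      exact inf_le_inf_left _ h1
    · rw [← sup_sup_distrib_left]
      exact sup_le_sup_left h2 _
  · obtain ⟨h1, h2⟩ := hG1 u1 v1 h
    constructor
    · rw [← inf_inf_distrib_right]
      exact inf_le_inf_right _ h1
    · rw [← sup_sup_distrib_right]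
      exact sup_le_sup_right h2 _
end

section
/- Weak isomorphism between Pythagorean fuzzy graphs is transitive: if g : V₁ → V₂ is a weak isomorphism from G₁** to G₂** and h : V₂ → V₃ is a weak isomorphism from G₂** to G₃**, then h ∘ g is a weak isomorphism from G₁** to G₃**. -/
/-- A Pythagorean fuzzy graph. -/
structure PFGraph (V : Type) where
  E : V → V → Prop
  ςP : V → ℝ
  ξP : V → ℝ
  ςQ : V → V → ℝ
  ξQ : V → V → ℝ

/-- `g` is a weak isomorphism from `G1` to `G2`: a bijective homomorphism
preserving the vertex values exactly. -/
def IsWeakIsom {V1 V2 : Type} (G1 : PFGraph V1) (G2 : PFGraph V2)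
    (g : V1 ≃ V2) : Prop :=
  (∀ u, G1.ςP u = G2.ςP (g u) ∧ G1.ξP u = G2.ξP (g u)) ∧
  (∀ u v, G1.E u v → G2.E (g u) (g v) ∧
    G1.ςQ u v ≤ G2.ςQ (g u) (g v) ∧ G1.ξQ u v ≥ G2.ξQ (g u) (g v))

/-- Weak isomorphism between Pythagorean fuzzy graphs is transitive. -/
theorem weakIsom_trans {V1 V2 V3 : Type}
    (G1 : PFGraph V1) (G2 : PFGraph V2) (G3 : PFGraph V3)
    (g : V1 ≃ V2) (h : V2 ≃ V3)
    (hg : IsWeakIsom G1 G2 g) (hh : IsWeakIsom G2 G3 h) :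
    IsWeakIsom G1 G3 (g.trans h) := by
  obtain ⟨hgP, hgQ⟩ := hg
  obtain ⟨hhP, hhQ⟩ := hh
  refine ⟨fun u => ?_, fun u v huv => ?_⟩
  · exact ⟨(hgP u).1.trans (hhP (g u)).1, (hgP u).2.trans (hhP (g u)).2⟩
  · obtain ⟨hE2, hs2, hx2⟩ := hgQ u v huv
    obtain ⟨hE3, hs3, hx3⟩ := hhQ (g u) (g v) hE2
    exact ⟨hE3, hs2.trans hs3, hx3.trans hx2⟩
end

section
/- If G** = (P, Q) is a self-complementary Pythagorean fuzzy graph, then Σ_{u≠v} ς_Q(uv) = (1/2) Σ_{u≠v} min(ς_P(u), ς_P(v)) and Σ_{u≠v} ξ_Q(uv) = (1/2) Σ_{u≠v} max(ξ_P(u), ξ_P(v)). -/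
/-- If a Pythagorean fuzzy graph is self-complementary, then the sum of its
edge membership values over distinct pairs equals half the sum of the minima
of the endpoint memberships, and dually for non-memberships. -/
theorem self_complementary_sums {V : Type*} [Fintype V] [DecidableEq V]
    (ςP ξP : V → ℝ) (ςQ ξQ : V → V → ℝ)
    (g : V ≃ V)
    (hVert : ∀ u, ςP (g u) = ςP u ∧ ξP (g u) = ξP u)
    (hEdgeς : ∀ u v, u ≠ v →
      min (ςP (g u)) (ςP (g v)) - ςQ (g u) (g v) = ςQ u v)
    (hEdgeξ : ∀ u v, u ≠ v →
      max (ξP (g u)) (ξP (g v)) - ξQ (g u) (g v) = ξQ u v) :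
    (∑ p ∈ Finset.univ.offDiag, ςQ p.1 p.2 =
      (1/2) * ∑ p ∈ Finset.univ.offDiag, min (ςP p.1) (ςP p.2)) ∧
    (∑ p ∈ Finset.univ.offDiag, ξQ p.1 p.2 =
      (1/2) * ∑ p ∈ Finset.univ.offDiag, max (ξP p.1) (ξP p.2)) := by
  have hmem : ∀ p : V × V, p ∈ Finset.univ.offDiag ↔
      (g p.1, g p.2) ∈ (Finset.univ : Finset V).offDiag := by
    intro p
    simp [Finset.mem_offDiag, g.injective.ne_iff]
  have key : ∀ f : V → V → ℝ,
      ∑ p ∈ Finset.univ.offDiag, f (g p.1) (g p.2) =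
      ∑ p ∈ Finset.univ.offDiag, f p.1 p.2 := by
    intro f
    apply Finset.sum_nbij' (fun p => (g p.1, g p.2)) (fun p => (g.symm p.1, g.symm p.2)) <;>
      simp_all [Finset.mem_offDiag, g.injective.ne_iff, g.symm.injective.ne_iff]
  constructor
  · have h1 : ∀ p ∈ Finset.univ.offDiag,
        ςQ p.1 p.2 = min (ςP p.1) (ςP p.2) - ςQ (g p.1) (g p.2) := by
      intro p hp
      rw [Finset.mem_offDiag] at hp
      rw [← hEdgeς p.1 p.2 hp.2.2, (hVert p.1).1, (hVert p.2).1]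
    have h2 := Finset.sum_congr rfl h1
    rw [Finset.sum_sub_distrib, key ςQ] at h2
    linarith
  · have h1 : ∀ p ∈ Finset.univ.offDiag,
        ξQ p.1 p.2 = max (ξP p.1) (ξP p.2) - ξQ (g p.1) (g p.2) := by
      intro p hp
      rw [Finset.mem_offDiag] at hp
      rw [← hEdgeξ p.1 p.2 hp.2.2, (hVert p.1).2, (hVert p.2).2]
    have h2 := Finset.sum_congr rfl h1
    rw [Finset.sum_sub_distrib, key ξQ] at h2
    linarith
end

section
/- For any two Pythagorean fuzzy graphs G₁** and G₂** with disjoint vertex sets, the complement of their join is isomorphic to the union of their complements: (G₁** + G₂**)‾ ≅ Ḡ₁** ∪ Ḡ₂** (via the identity map on V₁ ∪ V₂); dually, (G₁** ∪ G₂**)‾ ≅ Ḡ₁** + Ḡ₂**. -/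
/-- Combine two edge-value functions on disjoint vertex sets with a given
value on cross pairs. -/
def sumEdge {V1 V2 : Type} (f1 : V1 → V1 → ℝ) (f2 : V2 → V2 → ℝ)
    (cross : V1 → V2 → ℝ) : (V1 ⊕ V2) → (V1 ⊕ V2) → ℝ
  | .inl u, .inl v => f1 u v
  | .inr u, .inr v => f2 u v
  | .inl u, .inr v => cross u v
  | .inr u, .inl v => cross v u

/-- Complement edge membership values. -/
def complMem {V : Type} (ςP : V → ℝ) (ςQ : V → V → ℝ) : V → V → ℝ :=
  fun u v => min (ςP u) (ςP v) - ςQ u v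

/-- Complement edge non-membership values. -/
def complNonMem {V : Type} (ξP : V → ℝ) (ξQ : V → V → ℝ) : V → V → ℝ :=
  fun u v => max (ξP u) (ξP v) - ξQ u v

/-- The complement of the join of two Pythagorean fuzzy graphs equals the union
of their complements, and the complement of the union equals the join of the
complements (via the identity map on `V1 ⊕ V2`). -/
theorem compl_join_eq_union_compl {V1 V2 : Type}
    (ςP1 ξP1 : V1 → ℝ) (ςP2 ξP2 : V2 → ℝ)
    (ςQ1 ξQ1 : V1 → V1 → ℝ) (ςQ2 ξQ2 : V2 → V2 → ℝ) :
    (∀ x y : V1 ⊕ V2,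
      complMem (Sum.elim ςP1 ςP2)
          (sumEdge ςQ1 ςQ2 (fun u v => min (ςP1 u) (ςP2 v))) x y =
        sumEdge (complMem ςP1 ςQ1) (complMem ςP2 ςQ2) (fun _ _ => 0) x y ∧
      complNonMem (Sum.elim ξP1 ξP2)
          (sumEdge ξQ1 ξQ2 (fun u v => max (ξP1 u) (ξP2 v))) x y =
        sumEdge (complNonMem ξP1 ξQ1) (complNonMem ξP2 ξQ2) (fun _ _ => 0) x y) ∧
    (∀ x y : V1 ⊕ V2,
      complMem (Sum.elim ςP1 ςP2) (sumEdge ςQ1 ςQ2 (fun _ _ => 0)) x y =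
        sumEdge (complMem ςP1 ςQ1) (complMem ςP2 ςQ2)
          (fun u v => min (ςP1 u) (ςP2 v)) x y ∧
      complNonMem (Sum.elim ξP1 ξP2) (sumEdge ξQ1 ξQ2 (fun _ _ => 0)) x y =
        sumEdge (complNonMem ξP1 ξQ1) (complNonMem ξP2 ξQ2)
          (fun u v => max (ξP1 u) (ξP2 v)) x y) := by
  constructor <;> intro x y <;>
    rcases x with u | u <;> rcases y with v | v <;>
    simp [complMem, complNonMem, sumEdge, min_comm, max_comm] <;> ring
end

section
/- The Cartesian product of two strong Pythagorean fuzzy graphs is strong: if ς_{Q_i}(uv) = min(ς_{P_i}(u), ς_{P_i}(v)) and ξ_{Q_i}(uv) = max(ξ_{P_i}(u), ξ_{P_i}(v)) for all edges of G_i** (i = 1,2), then every edge of G₁** × G₂** satisfies ς_{Q₁×Q₂}(e) = min of the endpoint memberships and ξ_{Q₁×Q₂}(e) = max of the endpoint non-memberships. -/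
/-- The Cartesian product of two strong Pythagorean fuzzy graphs is strong. -/
theorem cartesian_product_of_strong_PFGs_is_strong {V1 V2 : Type*}
    (E1 : V1 → V1 → Prop) (E2 : V2 → V2 → Prop)
    (ςP1 ξP1 : V1 → ℝ) (ςP2 ξP2 : V2 → ℝ)
    (ςQ1 ξQ1 : V1 → V1 → ℝ) (ςQ2 ξQ2 : V2 → V2 → ℝ)
    (hStrong1 : ∀ u v, E1 u v →
      ςQ1 u v = min (ςP1 u) (ςP1 v) ∧ ξQ1 u v = max (ξP1 u) (ξP1 v))
    (hStrong2 : ∀ u v, E2 u v →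
      ςQ2 u v = min (ςP2 u) (ςP2 v) ∧ ξQ2 u v = max (ξP2 u) (ξP2 v)) :
    (∀ (u : V1) (u2 v2 : V2), E2 u2 v2 →
      min (ςP1 u) (ςQ2 u2 v2) = min (min (ςP1 u) (ςP2 u2)) (min (ςP1 u) (ςP2 v2)) ∧
      max (ξP1 u) (ξQ2 u2 v2) = max (max (ξP1 u) (ξP2 u2)) (max (ξP1 u) (ξP2 v2))) ∧
    (∀ (w : V2) (u1 v1 : V1), E1 u1 v1 →
      min (ςQ1 u1 v1) (ςP2 w) = min (min (ςP1 u1) (ςP2 w)) (min (ςP1 v1) (ςP2 w)) ∧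
      max (ξQ1 u1 v1) (ξP2 w) = max (max (ξP1 u1) (ξP2 w)) (max (ξP1 v1) (ξP2 w))) := by
  constructor
  · intro u u2 v2 h
    obtain ⟨h1, h2⟩ := hStrong2 u2 v2 h
    rw [h1, h2]
    constructor
    · rw [inf_inf_distrib_left]
    · rw [sup_sup_distrib_left]
  · intro w u1 v1 h
    obtain ⟨h1, h2⟩ := hStrong1 u1 v1 h
    rw [h1, h2]
    constructor
    · rw [inf_inf_distrib_right]
    · rw [sup_sup_distrib_right]
end
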